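/- arXiv:0807.2187 — 7 statements merged into one kernel-verified Lean document; each statement's English description precedes it below -/
import Mathlib

section
/- Let κ < 0 and let u : (−∞,0) → ℝ be twice differentiable. Define w(s) := u(−sinh²(√(−κ)·s/2)) for s ∈ (0,∞). Then for every s > 0, setting t := −sinh²(√(−κ)·s/2), one has −w''(s) − √(−κ)·coth(√(−κ)·s)·w'(s) + (2κ/(1+cosh(√(−κ)·s)))·w(s) = κ·[ −t(1−t)·u''(t) − (1−2t)·u'(t) + u(t)/(1−t) ]. -/
/-!
Writing `x = √(-κ) s`, the substitution is `t = (1 - cosh x) / 2`, so that `1 - t = (1 + cosh x) / 2`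
and `t (1 - t) = -sinh² x / 4`. The second-order chain rule for `w = u ∘ t` then turns `L₁ w` into
`κ · T₁ u` once the denominators `sinh x` and `1 + cosh x` are cleared.
-/

open Filter Topology Real

theorem hasDerivAt_deriv_comp_of_eventually {u φ φ' : ℝ → ℝ} {s φ'' : ℝ}
    (hu : ∀ᶠ x in 𝓝 s, DifferentiableAt ℝ u (φ x))
    (hu' : DifferentiableAt ℝ (deriv u) (φ s))
    (hφ : ∀ᶠ x in 𝓝 s, HasDerivAt φ (φ' x) x) (hφ' : HasDerivAt φ' φ'' s) :
    HasDerivAt (deriv (u ∘ φ))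
      (deriv (deriv u) (φ s) * φ' s * φ' s + deriv u (φ s) * φ'') s := by
  have hderiv : deriv (u ∘ φ) =ᶠ[𝓝 s] fun x => deriv u (φ x) * φ' x := by
    filter_upwards [hu, hφ] with x hux hφx
    exact (hux.hasDerivAt.comp x hφx).deriv
  exact ((hu'.hasDerivAt.comp s hφ.self_of_nhds).mul hφ').congr_of_eventuallyEq hderiv

namespace Real

theorem sinh_sq_half (x : ℝ) : sinh (x / 2) ^ 2 = (cosh x - 1) / 2 := by
  conv_rhs => rw [← mul_div_cancel₀ x (two_ne_zero' ℝ), cosh_two_mul, cosh_sq]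
  ring

theorem hasDerivAt_neg_sinh_sq_half (a x : ℝ) :
    HasDerivAt (fun x => -sinh (a * x / 2) ^ 2) (-(a / 2 * sinh (a * x))) x := by
  simp only [sinh_sq_half]
  refine ((((hasDerivAt_id x).const_mul a).cosh.sub_const 1).div_const 2).neg.congr_deriv ?_
  simp only [id, mul_one]
  ring

theorem hasDerivAt_neg_half_sinh (a x : ℝ) :
    HasDerivAt (fun x => -(a / 2 * sinh (a * x))) (-(a / 2 * (cosh (a * x) * a))) x :=
  ((((hasDerivAt_id x).const_mul a).sinh).const_mul (a / 2)).neg.congr_deriv (by simp)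

end Real

/-- for κ < 0 and a twice differentiable u : (−∞,0) → ℝ, the function
w(s) := u(−sinh²(√(−κ) s/2)) satisfies, for s > 0 and t := −sinh²(√(−κ) s/2),
−w''(s) − √(−κ) coth(√(−κ) s) w'(s) + (2κ/(1+cosh(√(−κ) s))) w(s)
  = κ[−t(1−t)u''(t) − (1−2t)u'(t) + u(t)/(1−t)]. -/
theorem stmt_5 (κ : ℝ) (hκ : κ < 0) (u : ℝ → ℝ)
    (hu : ∀ t : ℝ, t < 0 → DifferentiableAt ℝ u t)
    (hu' : ∀ t : ℝ, t < 0 → DifferentiableAt ℝ (deriv u) t)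
    (w : ℝ → ℝ) (hw : ∀ s : ℝ, w s = u (-(Real.sinh (Real.sqrt (-κ) * s / 2) ^ 2))) :
    ∀ s : ℝ, 0 < s →
      -(deriv (deriv w) s)
          - Real.sqrt (-κ) * (Real.cosh (Real.sqrt (-κ) * s) / Real.sinh (Real.sqrt (-κ) * s)) *
            deriv w s
          + (2 * κ / (1 + Real.cosh (Real.sqrt (-κ) * s))) * w s
        = κ * (-((-(Real.sinh (Real.sqrt (-κ) * s / 2) ^ 2)) *
              (1 - (-(Real.sinh (Real.sqrt (-κ) * s / 2) ^ 2))) *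
              deriv (deriv u) (-(Real.sinh (Real.sqrt (-κ) * s / 2) ^ 2)))
            - (1 - 2 * (-(Real.sinh (Real.sqrt (-κ) * s / 2) ^ 2))) *
              deriv u (-(Real.sinh (Real.sqrt (-κ) * s / 2) ^ 2))
            + u (-(Real.sinh (Real.sqrt (-κ) * s / 2) ^ 2)) /
              (1 - (-(Real.sinh (Real.sqrt (-κ) * s / 2) ^ 2)))) := by
  intro s hs
  set a := √(-κ)
  have ha : 0 < a := sqrt_pos.2 (neg_pos.2 hκ)
  have hκa : κ = -a ^ 2 := by rw [sq_sqrt (neg_nonneg.2 hκ.le), neg_neg]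
  have ht : ∀ x, 0 < x → -sinh (a * x / 2) ^ 2 < 0 := fun x hx =>
    neg_neg_of_pos (pow_pos (sinh_pos_iff.2 (by positivity)) 2)
  have hwφ : w = u ∘ fun x => -sinh (a * x / 2) ^ 2 := funext hw
  have hw1 : HasDerivAt w (deriv u (-sinh (a * s / 2) ^ 2) * -(a / 2 * sinh (a * s))) s := by
    rw [hwφ]
    exact (hu _ (ht s hs)).hasDerivAt.comp s (hasDerivAt_neg_sinh_sq_half a s)
  have hw2 := hasDerivAt_deriv_comp_of_eventually
    (φ := fun x => -sinh (a * x / 2) ^ 2) (u := u)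
    (eventually_gt_nhds hs |>.mono fun x hx => hu _ (ht x hx)) (hu' _ (ht s hs))
    (Eventually.of_forall (hasDerivAt_neg_sinh_sq_half a)) (hasDerivAt_neg_half_sinh a s)
  rw [← hwφ] at hw2
  rw [hw2.deriv, hw1.deriv, hw s]
  simp only [sinh_sq_half, hκa]
  have hsinh : sinh (a * s) ≠ 0 := (sinh_pos_iff.2 (by positivity)).ne'
  have hcosh : 1 + cosh (a * s) ≠ 0 := by positivity
  rw [show 1 - -((cosh (a * s) - 1) / 2) = (1 + cosh (a * s)) / 2 by ring]
  set t := -((cosh (a * s) - 1) / 2)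
  field_simp
  linear_combination -(deriv (deriv u) t * (1 + cosh (a * s))) * sinh_sq (a * s)
end

section
/- Let κ > 0 and let j ≥ 0 be an integer. Then the function w(s) := cos²(√κ·s/2)·P_j^{(0,2)}(cos(√κ·s)) satisfies −w''(s) − √κ·cot(√κ·s)·w'(s) + (2κ/(1+cos(√κ·s)))·w(s) = κ·(j+1)(j+2)·w(s) for every s ∈ (0, π/√κ). -/
/-!
With `x = cos (√κ s)` one has `cos² (√κ s / 2) = (1 + x) / 2`, so `w = A · Q(x) / (1 + x)`
where `Q = (d/dx)^j [(1 - x)^j (1 + x)^(j+2)]`. The polynomial `p = (1 - x)^j (1 + x)^(j+2)`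
satisfies `(1 - x²) p' = (2 - (2j + 2) x) p`; differentiating this `j + 1` times gives
`(1 - x²) Q'' = 2 Q' - (j + 1)(j + 2) Q`. In the variable `x`, the operator
`-d²/ds² - √κ cot (√κ s) d/ds` becomes `κ (2x d/dx - (1 - x²) d²/dx²)`, and applied to
`f = Q / (1 + x)` the equation for `Q` is exactly the claimed one.
-/

open Polynomial Real Filter Topology

noncomputable def jacobiP02 (j : ℕ) (x : ℝ) : ℝ :=
  ((-1) ^ j / (2 ^ j * (Nat.factorial j : ℝ) * (1 + x) ^ 2)) *
    iteratedDeriv j (fun y : ℝ => (1 - y) ^ j * (1 + y) ^ (j + 2)) x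

noncomputable def rodriguesPoly02 (R : Type*) [CommRing R] (j : ℕ) : R[X] :=
  derivative^[j] ((1 - X) ^ j * (1 + X) ^ (j + 2))

section

variable {R : Type*} [CommRing R]

theorem one_sub_X_sq_mul_derivative_derivative {q r : R[X]} {a c e : R}
    (h : (1 - X ^ 2) * derivative q = (C a - C c * X) * q + C e * r) :
    (1 - X ^ 2) * derivative (derivative q)
      = (C a - C (c - 2) * X) * derivative q + (C e * derivative r - C c * q) := by
  have h' := congrArg derivative h
  simp only [derivative_mul, derivative_add, derivative_sub, derivative_one, derivative_X_pow,
    derivative_C, derivative_X, Nat.cast_ofNat, map_ofNat] at h'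
  simp only [map_sub, map_ofNat]
  linear_combination h'

theorem one_sub_X_sq_mul_iterate_derivative {p : R[X]} {a b : R}
    (h : (1 - X ^ 2) * derivative p = (C a - C b * X) * p) (k : ℕ) :
    (1 - X ^ 2) * derivative^[k + 2] p
      = (C a - C (b - 2 * (k + 1)) * X) * derivative^[k + 1] p
        - C ((k + 1) * (b - k)) * derivative^[k] p := by
  induction k with
  | zero =>
    have h0 : (1 - X ^ 2) * derivative p = (C a - C b * X) * p + C 0 * 0 := by simpa using h
    simpa [sub_eq_add_neg] using one_sub_X_sq_mul_derivative_derivative h0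
  | succ k ih =>
    have hk : derivative (derivative^[k] p) = derivative^[k + 1] p :=
      (Function.iterate_succ_apply' _ _ _).symm
    have ih' : (1 - X ^ 2) * derivative (derivative^[k + 1] p)
        = (C a - C (b - 2 * (k + 1)) * X) * derivative^[k + 1] p
          + C (-((k + 1) * (b - k))) * derivative^[k] p := by
      rw [← Function.iterate_succ_apply' derivative, ih, map_neg]
      ring
    rw [Function.iterate_succ_apply', Function.iterate_succ_apply',
      one_sub_X_sq_mul_derivative_derivative ih', hk, ← Function.iterate_succ_apply' derivative]
    simp only [map_sub, map_neg, map_mul, map_add, map_natCast, map_ofNat, map_one, Nat.cast_add,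
      Nat.cast_one]
    ring

theorem one_sub_X_sq_mul_derivative_one_sub_X_pow_mul_one_add_X_pow (j : ℕ) :
    (1 - X ^ 2) * derivative ((1 - X) ^ j * (1 + X) ^ (j + 2) : R[X])
      = (C 2 - C (2 * (j : R) + 2) * X) * ((1 - X) ^ j * (1 + X) ^ (j + 2)) := by
  cases j with
  | zero => simp [derivative_pow_succ, map_ofNat]; ring
  | succ n =>
    simp only [derivative_mul, derivative_pow_succ, derivative_sub, derivative_one,
      derivative_X, map_add, map_mul, map_ofNat, map_natCast, Nat.cast_add, Nat.cast_ofNat, map_one]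
    ring

theorem one_sub_X_sq_mul_derivative_derivative_rodriguesPoly02 (j : ℕ) :
    (1 - X ^ 2) * derivative (derivative (rodriguesPoly02 R j))
      = 2 * derivative (rodriguesPoly02 R j)
        - C (((j : R) + 1) * ((j : R) + 2)) * rodriguesPoly02 R j := by
  have h := one_sub_X_sq_mul_iterate_derivative
    (one_sub_X_sq_mul_derivative_one_sub_X_pow_mul_one_add_X_pow (R := R) j) j
  rw [show 2 * (j : R) + 2 - 2 * (j + 1) = 0 by ring,
    show ((j : R) + 1) * (2 * j + 2 - j) = (j + 1) * (j + 2) by ring, map_zero, zero_mul,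
    sub_zero, map_ofNat] at h
  simpa only [rodriguesPoly02, Function.iterate_succ_apply'] using h

end

theorem Polynomial.iteratedDeriv_eval {𝕜 : Type*} [NontriviallyNormedField 𝕜] (p : 𝕜[X])
    (n : ℕ) :
    iteratedDeriv n (fun x => p.eval x) = fun x => (derivative^[n] p).eval x := by
  induction n with
  | zero => simp
  | succ n ih =>
    rw [iteratedDeriv_succ, ih, Function.iterate_succ_apply']
    ext x
    exact Polynomial.deriv _

theorem jacobiP02_eq_eval_rodriguesPoly02 (j : ℕ) (x : ℝ) :
    jacobiP02 j x
      = (-1) ^ j / (2 ^ j * (Nat.factorial j : ℝ)) * (rodriguesPoly02 ℝ j).eval x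
        / (1 + x) ^ 2 := by
  have hp : (fun y : ℝ => (1 - y) ^ j * (1 + y) ^ (j + 2))
      = fun y => ((1 - X) ^ j * (1 + X) ^ (j + 2) : ℝ[X]).eval y := by
    simp
  rw [jacobiP02, hp, iteratedDeriv_eval, rodriguesPoly02]
  simp only [div_eq_mul_inv, mul_inv]
  ring

theorem cos_sq_half_mul_jacobiP02 (j : ℕ) (θ : ℝ) :
    cos (θ / 2) ^ 2 * jacobiP02 j (cos θ)
      = (C ((-1) ^ j / (2 ^ (j + 1) * (Nat.factorial j : ℝ))) * rodriguesPoly02 ℝ j).eval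
          (cos θ) / (1 + cos θ) := by
  rw [cos_sq, mul_div_cancel₀ θ two_ne_zero, jacobiP02_eq_eval_rodriguesPoly02, eval_C_mul]
  rcases eq_or_ne (1 + cos θ) 0 with h | h
  · -- both sides vanish by the convention `x / 0 = 0`
    simp [h]
  · field_simp
    ring

theorem hasDerivAt_eval_div_one_add_pow (g : ℝ[X]) (n : ℕ) {y : ℝ} (hy : 1 + y ≠ 0) :
    HasDerivAt (fun y => g.eval y / (1 + y) ^ n)
      ((derivative g).eval y / (1 + y) ^ n - n * g.eval y / (1 + y) ^ (n + 1)) y := by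
  have h := (g.hasDerivAt y).div (((hasDerivAt_id y).const_add 1).pow n) (pow_ne_zero n hy)
  refine h.congr_deriv ?_
  simp only [id, Pi.pow_apply]
  cases n with
  | zero => simp
  | succ m =>
    rw [Nat.add_sub_cancel]
    field_simp
    ring

theorem neg_deriv_deriv_sub_cot_mul_deriv_comp_cos {f f' : ℝ → ℝ} {f'' r s : ℝ}
    (hf : ∀ᶠ y in 𝓝 (cos (r * s)), HasDerivAt f (f' y) y)
    (hf' : HasDerivAt f' f'' (cos (r * s))) (hsin : sin (r * s) ≠ 0) :
    -deriv (deriv fun t => f (cos (r * t))) s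
        - r * (cos (r * s) / sin (r * s)) * deriv (fun t => f (cos (r * t))) s
      = r ^ 2 * (2 * cos (r * s) * f' (cos (r * s))
          - (1 - cos (r * s) ^ 2) * f'') := by
  have hcos (t : ℝ) : HasDerivAt (fun t => cos (r * t)) (-sin (r * t) * r) t := by
    simpa using ((hasDerivAt_id t).const_mul r).cos
  have hsin' : HasDerivAt (fun t => -sin (r * t) * r) (-(cos (r * s) * r) * r) s := by
    simpa using (((hasDerivAt_id s).const_mul r).sin.neg).mul_const r
  have hw : ∀ᶠ t in 𝓝 s,
      HasDerivAt (fun t => f (cos (r * t))) (f' (cos (r * t)) * (-sin (r * t) * r)) t := by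
    filter_upwards [(hcos s).continuousAt.tendsto.eventually hf] with t ht
    exact ht.comp t (hcos t)
  have hderiv : deriv (fun t => f (cos (r * t))) =ᶠ[𝓝 s]
      fun t => f' (cos (r * t)) * (-sin (r * t) * r) :=
    hw.mono fun t ht => ht.deriv
  have hderiv' : HasDerivAt (fun t => f' (cos (r * t)) * (-sin (r * t) * r))
      (f'' * (-sin (r * s) * r) * (-sin (r * s) * r)
        + f' (cos (r * s)) * (-(cos (r * s) * r) * r)) s :=
    (hf'.comp s (hcos s)).mul hsin'
  rw [hderiv.deriv_eq, hderiv'.deriv, hw.self_of_nhds.deriv, ← sin_sq]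
  field_simp
  ring

theorem neg_deriv_deriv_sub_cot_mul_deriv_eval_cos_div_one_add_cos {g : ℝ[X]} {μ r s : ℝ}
    {w : ℝ → ℝ}
    (hg : (1 - X ^ 2) * derivative (derivative g) = 2 * derivative g - C μ * g)
    (hw : ∀ t, w t = g.eval (cos (r * t)) / (1 + cos (r * t))) (hsin : sin (r * s) ≠ 0) :
    -deriv (deriv w) s - r * (cos (r * s) / sin (r * s)) * deriv w s
        + (2 * r ^ 2 / (1 + cos (r * s))) * w s
      = r ^ 2 * μ * w s := by
  set x := cos (r * s) with hx
  have hx1 : 1 + x ≠ 0 := by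
    intro h
    have : sin (r * s) ^ 2 = 0 := by rw [sin_sq, ← hx]; linear_combination (1 - x) * h
    exact hsin (pow_eq_zero_iff two_ne_zero |>.mp this)
  have hf : ∀ᶠ y in 𝓝 x, HasDerivAt (fun y => g.eval y / (1 + y))
      ((derivative g).eval y / (1 + y) - g.eval y / (1 + y) ^ 2) y := by
    filter_upwards [(continuous_const.add continuous_id).continuousAt.eventually_ne hx1]
      with y hy
    simpa using hasDerivAt_eval_div_one_add_pow g 1 hy
  have hf' : HasDerivAt (fun y => (derivative g).eval y / (1 + y) - g.eval y / (1 + y) ^ 2)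
      ((derivative (derivative g)).eval x / (1 + x) - 2 * (derivative g).eval x / (1 + x) ^ 2
        + 2 * g.eval x / (1 + x) ^ 3) x := by
    have h := (hasDerivAt_eval_div_one_add_pow (derivative g) 1 hx1).fun_sub
      (hasDerivAt_eval_div_one_add_pow g 2 hx1)
    simp only [pow_one] at h
    refine h.congr_deriv ?_
    push_cast
    ring
  have hw' : w = fun t => g.eval (cos (r * t)) / (1 + cos (r * t)) := funext hw
  rw [hw', neg_deriv_deriv_sub_cot_mul_deriv_comp_cos hf hf' hsin]
  have hgx := congrArg (eval x) hg
  simp only [eval_sub, eval_mul, eval_one, eval_X, eval_pow, eval_C, eval_ofNat] at hgx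
  simp only [← hx]
  field_simp
  linear_combination (-r ^ 2 * (1 + x) ^ 2) * hgx

/-- for κ > 0 and an integer j ≥ 0, the function
w(s) := cos²(√κ s/2) P_j^{(0,2)}(cos(√κ s)) satisfies
−w''(s) − √κ cot(√κ s) w'(s) + (2κ/(1+cos(√κ s))) w(s) = κ(j+1)(j+2) w(s)
for every s ∈ (0, π/√κ). -/
theorem stmt_7 (κ : ℝ) (hκ : 0 < κ) (j : ℕ) (w : ℝ → ℝ)
    (hw : ∀ s : ℝ, w s =
      Real.cos (Real.sqrt κ * s / 2) ^ 2 * jacobiP02 j (Real.cos (Real.sqrt κ * s))) :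
    ∀ s ∈ Set.Ioo (0 : ℝ) (Real.pi / Real.sqrt κ),
      -(deriv (deriv w) s)
          - Real.sqrt κ * (Real.cos (Real.sqrt κ * s) / Real.sin (Real.sqrt κ * s)) * deriv w s
          + (2 * κ / (1 + Real.cos (Real.sqrt κ * s))) * w s
        = κ * ((j : ℝ) + 1) * ((j : ℝ) + 2) * w s := by
  rintro s ⟨hs0, hsπ⟩
  have hr : 0 < √κ := sqrt_pos.mpr hκ
  have hsin : sin (√κ * s) ≠ 0 :=
    (sin_pos_of_pos_of_lt_pi (mul_pos hr hs0) (by rwa [lt_div_iff₀' hr] at hsπ)).ne'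
  set A : ℝ := (-1) ^ j / (2 ^ (j + 1) * (Nat.factorial j : ℝ))
  have hode := one_sub_X_sq_mul_derivative_derivative_rodriguesPoly02 (R := ℝ) j
  have hode_A : (1 - X ^ 2) * derivative (derivative (C A * rodriguesPoly02 ℝ j))
      = 2 * derivative (C A * rodriguesPoly02 ℝ j)
        - C (((j : ℝ) + 1) * ((j : ℝ) + 2)) * (C A * rodriguesPoly02 ℝ j) := by
    simp only [derivative_C_mul]
    linear_combination C A * hode
  have h := neg_deriv_deriv_sub_cot_mul_deriv_eval_cos_div_one_add_cos (w := w) hode_A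
    (fun t => by rw [hw, cos_sq_half_mul_jacobiP02]) hsin
  rw [sq_sqrt hκ.le] at h
  linear_combination h
end

section
/- Let α ∈ ℂ be such that 2α is not a nonpositive integer. For every real t < 0, the function u(t) := (1−t)^{−α}·F(α, α; 2α; 1/(1−t)) satisfies t(1−t)·u''(t) + (1−2t)·u'(t) + α(α−1)·u(t) = 0. (Note that 1/(1−t) ∈ (0,1) for t < 0, so the defining series converges.) -/
/-- The Gauss hypergeometric function F(a,b;c;x), defined for real x with |x| < 1 by its
power series, with Pochhammer symbols (a)_k = a(a+1)⋯(a+k−1). -/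
noncomputable def hypF (a b c : ℂ) (x : ℝ) : ℂ :=
  ∑' k : ℕ, ((ascPochhammer ℂ k).eval a * (ascPochhammer ℂ k).eval b /
    ((ascPochhammer ℂ k).eval c * (Nat.factorial k : ℂ))) * (x : ℂ) ^ k

/-!
On `t < 1` we have `u t = V (1 - t)` with `V w = ∑ c_k w^(-α-k)`, where `c_k` are the coefficients
of `F(α, α; 2α; ·)`, and the equation is invariant under `t ↦ 1 - t`, so it suffices to show that
`V` solves it for `w > 1`. Since `c_(k+1) / c_k → 1`, the series `∑ c_k x^k` converges absolutely
for `|x| < 1` even after multiplying `c_k` by polynomials in `k`, so `V` may be differentiated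
termwise. The operator sends `w^(-α-k)` to `(α+k)² w^(-α-k-1) - k(k+2α-1) w^(-α-k)`, and the
recursion `(k+1)(k+2α) c_(k+1) = (α+k)² c_k` makes the resulting series telescope.
-/

open Complex Filter Topology

noncomputable def cpowSeries (a : ℕ → ℂ) (β : ℂ) (v : ℝ) : ℂ :=
  ∑' k : ℕ, a k * (v : ℂ) ^ (β - k)

theorem norm_ofReal_cpow_sub_natCast {v : ℝ} (hv : 0 < v) (β : ℂ) (k : ℕ) :
    ‖(v : ℂ) ^ (β - k)‖ = v ^ β.re * v⁻¹ ^ k := by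
  rw [norm_cpow_eq_rpow_re_of_pos hv, sub_re, natCast_re, Real.rpow_sub hv, Real.rpow_natCast,
    div_eq_mul_inv, inv_pow]

theorem Real.rpow_le_max_of_mem_Icc {L U v : ℝ} (hL : 0 < L) (hv : v ∈ Set.Icc L U) (γ : ℝ) :
    v ^ γ ≤ max (L ^ γ) (U ^ γ) := by
  rcases le_total 0 γ with h | h
  · exact le_max_of_le_right (Real.rpow_le_rpow (hL.le.trans hv.1) hv.2 h)
  · exact le_max_of_le_left (Real.rpow_le_rpow_of_nonpos hL hv.1 h)

def AbsConvOnUnitDisc (a : ℕ → ℂ) : Prop :=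
  ∀ x : ℝ, 0 ≤ x → x < 1 → Summable fun k => ‖a k‖ * x ^ k

namespace AbsConvOnUnitDisc

variable {a : ℕ → ℂ}

theorem of_ratio_tendsto_one {ρ : ℕ → ℂ} (hρ : Tendsto ρ atTop (𝓝 1))
    (ha : ∀ k, a (k + 1) = a k * ρ k) : AbsConvOnUnitDisc a := by
  intro x hx0 hx1
  have hρx : Tendsto (fun k => ‖ρ k‖ * x) atTop (𝓝 x) := by
    simpa using (hρ.norm.mul_const x)
  refine summable_of_ratio_norm_eventually_le (r := (1 + x) / 2) (by linarith) ?_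
  filter_upwards [hρx.eventually_lt_const (by linarith : x < (1 + x) / 2)] with k hk
  have hxk : 0 ≤ ‖a k‖ * x ^ k := by positivity
  rw [Real.norm_of_nonneg hxk, Real.norm_of_nonneg (by positivity), ha, norm_mul, pow_succ]
  calc ‖a k‖ * ‖ρ k‖ * (x ^ k * x) = (‖ρ k‖ * x) * (‖a k‖ * x ^ k) := by ring
    _ ≤ (1 + x) / 2 * (‖a k‖ * x ^ k) := by gcongr

theorem summable_natCast_mul (ha : AbsConvOnUnitDisc a) {x : ℝ} (hx0 : 0 ≤ x) (hx1 : x < 1) :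
    Summable fun k : ℕ => (k : ℝ) * ‖a k‖ * x ^ k := by
  set y := (1 + x) / 2 with hy
  have hy0 : 0 < y := by positivity
  have hay := ha y hy0.le (by rw [hy]; linarith)
  have hr : ‖x / y‖ < 1 := by
    rw [Real.norm_of_nonneg (by positivity), div_lt_one hy0, hy]; linarith
  refine Summable.of_nonneg_of_le (fun k => by positivity) (fun k => ?_)
    ((summable_pow_mul_geometric_of_norm_lt_one 1 hr).mul_right (∑' j, ‖a j‖ * y ^ j))
  have hle := hay.le_tsum k fun j _ => by positivity
  calc (k : ℝ) * ‖a k‖ * x ^ k = (k : ℝ) ^ 1 * (x / y) ^ k * (‖a k‖ * y ^ k) := by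
        rw [div_pow, pow_one]; field_simp
    _ ≤ (k : ℝ) ^ 1 * (x / y) ^ k * ∑' j, ‖a j‖ * y ^ j := by gcongr

theorem of_norm_le {b : ℕ → ℂ} (ha : AbsConvOnUnitDisc a) (C : ℝ)
    (hb : ∀ k, ‖b k‖ ≤ (C + k) * ‖a k‖) : AbsConvOnUnitDisc b := fun x hx0 hx1 =>
  Summable.of_nonneg_of_le (fun k => by positivity)
    (fun k => by
      calc ‖b k‖ * x ^ k ≤ (C + k) * ‖a k‖ * x ^ k := by gcongr; exact hb k
        _ = C * (‖a k‖ * x ^ k) + k * ‖a k‖ * x ^ k := by ring)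
    (((ha x hx0 hx1).mul_left C).add (ha.summable_natCast_mul hx0 hx1))

theorem sub_natCast_mul (ha : AbsConvOnUnitDisc a) (β : ℂ) :
    AbsConvOnUnitDisc fun k => (β - k) * a k :=
  ha.of_norm_le ‖β‖ fun k => by
    rw [norm_mul]
    gcongr
    simpa using norm_sub_le β (k : ℂ)

theorem summable_mul_cpow (ha : AbsConvOnUnitDisc a) (β : ℂ) {w : ℝ} (hw : 1 < w) :
    Summable fun k : ℕ => a k * (w : ℂ) ^ (β - k) := by
  have hw0 : 0 < w := one_pos.trans hw
  refine .of_norm_bounded ((ha w⁻¹ (by positivity) (inv_lt_one_of_one_lt₀ hw)).mul_left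
    (w ^ β.re)) fun k => ?_
  rw [norm_mul, norm_ofReal_cpow_sub_natCast hw0]
  exact le_of_eq (by ring)

theorem hasDerivAt_cpowSeries (ha : AbsConvOnUnitDisc a) (β : ℂ) {w : ℝ} (hw : 1 < w) :
    HasDerivAt (cpowSeries a β) (cpowSeries (fun k => (β - k) * a k) (β - 1) w) w := by
  set L := (1 + w) / 2 with hL
  set U := w + 1
  set M := max (L ^ (β - 1).re) (U ^ (β - 1).re)
  have hL1 : 1 < L := by rw [hL]; linarith
  have hL0 : 0 < L := one_pos.trans hL1
  have hwLU : w ∈ Set.Ioo L U := ⟨by rw [hL]; linarith, by linarith⟩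
  have hterm : ∀ (k : ℕ) (v : ℝ), 0 < v → HasDerivAt (fun y : ℝ => a k * (y : ℂ) ^ (β - k))
      ((β - k) * a k * (v : ℂ) ^ (β - 1 - k)) v := fun k v hv => by
    have h := ((hasStrictDerivAt_cpow_const (c := β - k)
      (ofReal_mem_slitPlane.2 hv)).hasDerivAt.comp_ofReal).const_mul (a k)
    refine h.congr_deriv ?_
    rw [sub_right_comm]
    ring
  have hbound : ∀ (k : ℕ) (v : ℝ), v ∈ Set.Ioo L U →
      ‖(β - k) * a k * (v : ℂ) ^ (β - 1 - k)‖ ≤ M * (‖(β - k) * a k‖ * L⁻¹ ^ k) := by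
    intro k v hv
    have hv0 : 0 < v := hL0.trans hv.1
    rw [norm_mul, norm_ofReal_cpow_sub_natCast hv0]
    have h1 : v ^ (β - 1).re ≤ M := Real.rpow_le_max_of_mem_Icc hL0 (Set.Ioo_subset_Icc_self hv) _
    have h2 : v⁻¹ ^ k ≤ L⁻¹ ^ k := by gcongr; exact hv.1.le
    calc ‖(β - k) * a k‖ * (v ^ (β - 1).re * v⁻¹ ^ k)
        ≤ ‖(β - k) * a k‖ * (M * L⁻¹ ^ k) := by gcongr
      _ = M * (‖(β - k) * a k‖ * L⁻¹ ^ k) := by ring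
  have hsum := ((ha.sub_natCast_mul β) L⁻¹ (by positivity) (inv_lt_one_of_one_lt₀ hL1)).mul_left M
  exact hasDerivAt_tsum_of_isPreconnected hsum isOpen_Ioo isPreconnected_Ioo
    (fun k v hv => hterm k v (hL0.trans hv.1)) hbound hwLU (ha.summable_mul_cpow β hw) hwLU

end AbsConvOnUnitDisc

noncomputable def hypCoeff (a b c : ℂ) (k : ℕ) : ℂ :=
  (ascPochhammer ℂ k).eval a * (ascPochhammer ℂ k).eval b /
    ((ascPochhammer ℂ k).eval c * (Nat.factorial k : ℂ))

theorem ascPochhammer_eval_ne_zero {c : ℂ} (hc : ∀ m : ℕ, c ≠ -m) (k : ℕ) :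
    (ascPochhammer ℂ k).eval c ≠ 0 := by
  induction k with
  | zero => simp
  | succ k ih =>
    rw [ascPochhammer_succ_eval]
    exact mul_ne_zero ih fun h => hc k (eq_neg_of_add_eq_zero_left h)

theorem hypCoeff_succ (a b : ℂ) {c : ℂ} (hc : ∀ m : ℕ, c ≠ -m) (k : ℕ) :
    hypCoeff a b c (k + 1) = hypCoeff a b c k * ((a + k) * (b + k) / ((c + k) * (k + 1))) := by
  have hck : c + k ≠ 0 := fun h => hc k (eq_neg_of_add_eq_zero_left h)
  have := ascPochhammer_eval_ne_zero hc k
  simp only [hypCoeff, ascPochhammer_succ_eval, Nat.factorial_succ]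
  push_cast
  field_simp

theorem tendsto_hypCoeff_ratio (a b c : ℂ) :
    Tendsto (fun k : ℕ => (a + k) * (b + k) / ((c + k) * (k + 1))) atTop (𝓝 1) := by
  have h := (tendsto_add_mul_div_add_mul_atTop_nhds a c (1 : ℂ) one_ne_zero).mul
    (tendsto_add_mul_div_add_mul_atTop_nhds b 1 (1 : ℂ) one_ne_zero)
  simp only [one_mul, div_one, mul_one] at h
  refine h.congr fun k => ?_
  rw [div_mul_div_comm, add_comm (k : ℂ) 1]

theorem absConvOnUnitDisc_hypCoeff (a b : ℂ) {c : ℂ} (hc : ∀ m : ℕ, c ≠ -m) :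
    AbsConvOnUnitDisc (hypCoeff a b c) :=
  .of_ratio_tendsto_one (tendsto_hypCoeff_ratio a b c) (hypCoeff_succ a b hc)

theorem ofReal_cpow_mul_hypF (a b c β : ℂ) {w : ℝ} (hw : w ≠ 0) :
    (w : ℂ) ^ β * hypF a b c (1 / w) = cpowSeries (hypCoeff a b c) β w := by
  have hw' : (w : ℂ) ≠ 0 := ofReal_ne_zero.2 hw
  rw [hypF, cpowSeries, ← tsum_mul_left]
  refine tsum_congr fun k => ?_
  rw [cpow_sub _ _ hw', cpow_natCast, hypCoeff, one_div, ofReal_inv, inv_pow]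
  field_simp

noncomputable def hypTelescopeTerm (α z : ℂ) (k : ℕ) : ℂ :=
  k * (k + 2 * α - 1) * hypCoeff α α (2 * α) k * z ^ (-α - k)

theorem summable_hypTelescopeTerm (α : ℂ) (hα : ∀ m : ℕ, 2 * α ≠ -m) {w : ℝ} (hw : 1 < w) :
    Summable (hypTelescopeTerm α w) :=
  ((((absConvOnUnitDisc_hypCoeff α α hα).sub_natCast_mul (1 - 2 * α)).sub_natCast_mul
    0).summable_mul_cpow (-α) hw).congr fun k => by simp only [hypTelescopeTerm]; ring

/-- The equation applied to the `k`-th term of `∑ c_k z^(-α-k)`. -/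
theorem hypCoeff_ode_term_eq_sub (α : ℂ) (hα : ∀ m : ℕ, 2 * α ≠ -m) {z : ℂ} (hz : z ≠ 0) (k : ℕ) :
    z * (1 - z) * ((-α - 1 - k) * ((-α - k) * hypCoeff α α (2 * α) k) * z ^ (-α - 1 - 1 - k))
      + (1 - 2 * z) * ((-α - k) * hypCoeff α α (2 * α) k * z ^ (-α - 1 - k))
      + α * (α - 1) * (hypCoeff α α (2 * α) k * z ^ (-α - k))
      = hypTelescopeTerm α z (k + 1) - hypTelescopeTerm α z k := by
  have h2αk : 2 * α + k ≠ 0 := fun h => hα k (eq_neg_of_add_eq_zero_left h)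
  have hrec : (k + 1) * (2 * α + k) * hypCoeff α α (2 * α) (k + 1)
      = (α + k) ^ 2 * hypCoeff α α (2 * α) k := by
    rw [hypCoeff_succ α α hα k]
    field_simp
  have hpow : ∀ s : ℂ, z ^ (s + 1) = z ^ s * z := fun s => by rw [cpow_add _ _ hz, cpow_one]
  simp only [hypTelescopeTerm, Nat.cast_add_one]
  rw [show -α - ((k : ℂ) + 1) = -α - 1 - 1 - k + 1 by ring,
    show -α - (k : ℂ) = -α - 1 - 1 - k + 1 + 1 by ring,
    show -α - 1 - (k : ℂ) = -α - 1 - 1 - k + 1 by ring]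
  simp only [hpow]
  linear_combination (-(z ^ (-α - 1 - 1 - k) * z)) * hrec

theorem cpowSeries_hypCoeff_ode (α : ℂ) (hα : ∀ m : ℕ, 2 * α ≠ -m) {w : ℝ} (hw : 1 < w) :
    (w : ℂ) * (1 - w) * deriv (deriv (cpowSeries (hypCoeff α α (2 * α)) (-α))) w
      + (1 - 2 * w) * deriv (cpowSeries (hypCoeff α α (2 * α)) (-α)) w
      + α * (α - 1) * cpowSeries (hypCoeff α α (2 * α)) (-α) w = 0 := by
  set c := hypCoeff α α (2 * α)
  have hc : AbsConvOnUnitDisc c := absConvOnUnitDisc_hypCoeff α α hα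
  have hc1 := hc.sub_natCast_mul (-α)
  have hc2 := hc1.sub_natCast_mul (-α - 1)
  have hd1 := (hc.hasDerivAt_cpowSeries (-α) hw).deriv
  have hd2 : deriv (deriv (cpowSeries c (-α))) w =
      cpowSeries (fun k => (-α - 1 - k) * ((-α - k) * c k)) (-α - 1 - 1) w := by
    have h : deriv (cpowSeries c (-α)) =ᶠ[𝓝 w] cpowSeries (fun k => (-α - k) * c k) (-α - 1) :=
      (eventually_gt_nhds hw).mono fun v hv => (hc.hasDerivAt_cpowSeries (-α) hv).deriv
    rw [h.deriv_eq, (hc1.hasDerivAt_cpowSeries (-α - 1) hw).deriv]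
  have hg := summable_hypTelescopeTerm α hα hw
  have hz : (w : ℂ) ≠ 0 := ofReal_ne_zero.2 (one_pos.trans hw).ne'
  rw [hd2, hd1]
  unfold cpowSeries
  calc _ = ∑' k : ℕ, (hypTelescopeTerm α w (k + 1) - hypTelescopeTerm α w k) := by
        rw [← tsum_mul_left, ← tsum_mul_left, ← tsum_mul_left,
          ← ((hc2.summable_mul_cpow _ hw).mul_left _).tsum_add
            ((hc1.summable_mul_cpow _ hw).mul_left _),
          ← (((hc2.summable_mul_cpow _ hw).mul_left _).add
            ((hc1.summable_mul_cpow _ hw).mul_left _)).tsum_add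
            ((hc.summable_mul_cpow _ hw).mul_left _)]
        exact tsum_congr (hypCoeff_ode_term_eq_sub α hα hz)
    _ = 0 := by
        rw [((summable_nat_add_iff 1).2 hg).tsum_sub hg, hg.tsum_eq_zero_add]
        simp [hypTelescopeTerm]

/-- for α ∈ ℂ with 2α not a nonpositive integer and every real t < 0,
u(t) := (1−t)^{−α}·F(α,α;2α;1/(1−t)) satisfies t(1−t)u'' + (1−2t)u' + α(α−1)u = 0. -/
theorem stmt_10 (α : ℂ) (hα : ∀ m : ℕ, 2 * α ≠ -(m : ℂ)) (u : ℝ → ℂ)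
    (hu : ∀ t : ℝ, u t = ((1 - t : ℝ) : ℂ) ^ (-α) * hypF α α (2 * α) (1 / (1 - t))) :
    ∀ t : ℝ, t < 0 →
      (t : ℂ) * (1 - (t : ℂ)) * deriv (deriv u) t + (1 - 2 * (t : ℂ)) * deriv u t
        + α * (α - 1) * u t = 0 := by
  intro t ht
  set V := cpowSeries (hypCoeff α α (2 * α)) (-α)
  have huV : u =ᶠ[𝓝 t] fun s => V (1 - s) :=
    (eventually_lt_nhds (ht.trans one_pos)).mono fun s hs => by
      rw [hu, ofReal_cpow_mul_hypF _ _ _ _ (sub_ne_zero.2 hs.ne')]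
  have hu' : deriv u =ᶠ[𝓝 t] fun s => -deriv V (1 - s) :=
    huV.deriv.mono fun s hs => by rw [hs, deriv_comp_const_sub]
  rw [hu'.deriv_eq, huV.deriv_eq, huV.eq_of_nhds, deriv.fun_neg, deriv_comp_const_sub,
    deriv_comp_const_sub]
  have h := cpowSeries_hypCoeff_ode α hα (w := 1 - t) (by linarith)
  push_cast at h
  linear_combination h
end

section
/- Let α ∈ ℂ be such that 2−2α is not a nonpositive integer. For every real t < 0, the function u(t) := (1−t)^{α−1}·F(1−α, 1−α; 2−2α; 1/(1−t)) satisfies t(1−t)·u''(t) + (1−2t)·u'(t) + α(α−1)·u(t) = 0. (Note that 1/(1−t) ∈ (0,1) for t < 0, so the defining series converges.) -/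
/-!
The equation is the hypergeometric equation with parameters `(1 - α, α; 1)`, i.e. Legendre's
equation, which is invariant under the reflection `t ↦ 1 - t`. By Kummer's inversion,
`x^{-a} F(1/x)` solves the hypergeometric equation with parameters `(a, b; c)` as soon as `F`
solves it with parameters `(a, a - c + 1; a - b + 1)` at `1/x`; for `(1 - α, α; 1)` these are
`(1 - α, 1 - α; 2 - 2α)`, and `x = 1 - t > 1`. Finally, inside its disc of convergence the
series `F(a, b; c; ·)` solves the hypergeometric equation with parameters `(a, b; c)`, because
the equation amounts to the recurrence `(n + 1)(n + c) cₙ₊₁ = (n + a)(n + b) cₙ` for its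
coefficients.
-/

open Filter Topology FormalMultilinearSeries

theorem hypF_eq_ordinaryHypergeometric (a b c : ℂ) (x : ℝ) : hypF a b c x = ₂F₁ a b c (x : ℂ) := by
  rw [hypF, ordinaryHypergeometric_eq_tsum]
  refine tsum_congr fun n => ?_
  rw [smul_eq_mul, div_eq_mul_inv, mul_inv]
  ring

theorem HasFPowerSeriesOnBall.deriv_ofScalars {𝕜 : Type*} [NontriviallyNormedField 𝕜]
    [CompleteSpace 𝕜] {f : 𝕜 → 𝕜} {c : ℕ → 𝕜} {r : ENNReal}
    (h : HasFPowerSeriesOnBall f (ofScalars 𝕜 c) 0 r) :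
    HasFPowerSeriesOnBall (deriv f) (ofScalars 𝕜 fun n => (n + 1) * c (n + 1)) 0 r := by
  convert (ContinuousLinearMap.apply 𝕜 𝕜 (1 : 𝕜)).comp_hasFPowerSeriesOnBall h.fderiv using 1
  · rfl
  · refine FormalMultilinearSeries.ext fun n => ?_
    rw [← mkPiRing_coeff_eq (ofScalars 𝕜 _),
      ← mkPiRing_coeff_eq (ContinuousLinearMap.compFormalMultilinearSeries _ _), coeff_ofScalars]
    congr 1
    change _ = (ofScalars 𝕜 c).derivSeries.coeff n 1
    rw [derivSeries_coeff_one, coeff_ofScalars, nsmul_eq_mul, Nat.cast_succ]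

theorem HasFPowerSeriesOnBall.hasSum_ofScalars {𝕜 : Type*} [NontriviallyNormedField 𝕜]
    {f : 𝕜 → 𝕜} {c : ℕ → 𝕜} {r : ENNReal} (h : HasFPowerSeriesOnBall f (ofScalars 𝕜 c) 0 r)
    {z : 𝕜} (hz : ‖z‖ₑ < r) :
    HasSum (fun n => c n * z ^ n) (f z) := by
  simpa [ofScalars_apply_eq, mul_comm] using h.hasSum (y := z) (by simpa using hz)

theorem HasSum.mul_pow_of_succ {R : Type*} [CommRing R] [TopologicalSpace R] [IsTopologicalRing R]
    {b : ℕ → R} {z s : R} (h : HasSum (fun n => b (n + 1) * z ^ n) s) (hb : b 0 = 0) :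
    HasSum (fun n => b n * z ^ n) (z * s) := by
  rw [← hasSum_nat_add_iff' 1]
  simpa [hb, pow_succ, mul_assoc, mul_comm, mul_left_comm] using h.mul_left z

theorem ordinaryHypergeometricCoefficient_succ {𝕂 : Type*} [Field 𝕂] [CharZero 𝕂] (a b c : 𝕂)
    (n : ℕ) (hc : c + n ≠ 0) :
    (n + 1) * (c + n) * ordinaryHypergeometricCoefficient a b c (n + 1)
      = (a + n) * (b + n) * ordinaryHypergeometricCoefficient a b c n := by
  simp only [ordinaryHypergeometricCoefficient, ascPochhammer_succ_eval, Nat.factorial_succ,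
    Nat.cast_mul, Nat.cast_succ, mul_inv]
  field_simp

noncomputable def hypergeometricOp {𝕜 : Type*} [NontriviallyNormedField 𝕜] (a b c : 𝕜)
    (f : 𝕜 → 𝕜) (z : 𝕜) : 𝕜 :=
  z * (1 - z) * deriv (deriv f) z + (c - (a + b + 1) * z) * deriv f z - a * b * f z

theorem hypergeometricOp_ordinaryHypergeometric {𝕜 : Type*} [RCLike 𝕜] {a b c : 𝕜}
    (hc : ∀ n : ℕ, c + n ≠ 0) {z : 𝕜}
    (hz : ‖z‖ₑ < (ordinaryHypergeometricSeries 𝕜 a b c).radius) :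
    hypergeometricOp a b c (₂F₁ a b c) z = 0 := by
  set C := ordinaryHypergeometricCoefficient a b c
  have hF : HasFPowerSeriesOnBall (₂F₁ a b c) (ofScalars 𝕜 C) 0
      (ordinaryHypergeometricSeries 𝕜 a b c).radius :=
    (ordinaryHypergeometricSeries 𝕜 a b c).hasFPowerSeriesOnBall (zero_le.trans_lt hz)
  have h0 := hF.hasSum_ofScalars hz
  have h1 := hF.deriv_ofScalars.hasSum_ofScalars hz
  have h2 := hF.deriv_ofScalars.deriv_ofScalars.hasSum_ofScalars hz
  -- multiplying by `z` shifts the coefficients, so that all series run over the same `zⁿ`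
  have hzS2 : HasSum (fun n => (n * (n + 1) * C (n + 1)) * z ^ n)
      (z * deriv (deriv (₂F₁ a b c)) z) :=
    HasSum.mul_pow_of_succ (by push_cast at h2 ⊢; convert h2 using 3; ring) (by simp)
  have hz2S2 : HasSum (fun n => (n * (n - 1) * C n) * z ^ n)
      (z * (z * deriv (deriv (₂F₁ a b c)) z)) :=
    HasSum.mul_pow_of_succ (by push_cast; convert hzS2 using 3; ring) (by simp)
  have hzS1 : HasSum (fun n => (n * C n) * z ^ n) (z * deriv (₂F₁ a b c) z) :=
    HasSum.mul_pow_of_succ (by push_cast; exact h1) (by simp)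
  have hsum := (hzS2.add (h1.mul_left c)).sub
    ((hz2S2.add (hzS1.mul_left (a + b + 1))).add (h0.mul_left (a * b)))
  have hterm : ∀ n : ℕ, (n * (n + 1) * C (n + 1)) * z ^ n + c * ((n + 1) * C (n + 1) * z ^ n)
      - ((n * (n - 1) * C n) * z ^ n + (a + b + 1) * ((n * C n) * z ^ n)
        + a * b * (C n * z ^ n)) = 0 := fun n => by
    linear_combination z ^ n * ordinaryHypergeometricCoefficient_succ a b c n (hc n)
  simp only [hterm] at hsum
  unfold hypergeometricOp
  linear_combination hsum.unique hasSum_zero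

theorem analyticAt_ordinaryHypergeometric {𝕜 : Type*} [RCLike 𝕜] {a b c z : 𝕜}
    (hz : ‖z‖ₑ < (ordinaryHypergeometricSeries 𝕜 a b c).radius) :
    AnalyticAt 𝕜 (₂F₁ a b c) z :=
  ((ordinaryHypergeometricSeries 𝕜 a b c).hasFPowerSeriesOnBall
    (zero_le.trans_lt hz)).analyticAt_of_mem (by simpa using hz)

theorem ordinaryHypergeometricSeries_radius_eq_one_of_two_mul {𝕜 : Type*} [RCLike 𝕜] {a : 𝕜}
    (ha : ∀ n : ℕ, 2 * a + n ≠ 0) : (ordinaryHypergeometricSeries 𝕜 a a (2 * a)).radius = 1 := by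
  have ha' : ∀ k : ℕ, (k : 𝕜) ≠ -a := fun k h => ha (2 * k) (by push_cast; linear_combination 2 * h)
  exact ordinaryHypergeometricSeries_radius_eq_one _ _ _ _
    fun k => ⟨ha' k, ha' k, fun h => ha k (by linear_combination h)⟩

theorem enorm_inv_lt_radius_ordinaryHypergeometricSeries_two_mul {𝕜 : Type*} [RCLike 𝕜] {a x : 𝕜}
    (ha : ∀ n : ℕ, 2 * a + n ≠ 0) (hx : 1 < ‖x‖) :
    ‖x⁻¹‖ₑ < (ordinaryHypergeometricSeries 𝕜 a a (2 * a)).radius := by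
  rw [ordinaryHypergeometricSeries_radius_eq_one_of_two_mul ha, ← ofReal_norm,
    ENNReal.ofReal_lt_one, norm_inv]
  exact inv_lt_one_of_one_lt₀ hx

theorem hypergeometricOp_comp_one_sub {𝕜 : Type*} [NontriviallyNormedField 𝕜] (a b c : 𝕜)
    (f : 𝕜 → 𝕜) (s : 𝕜) :
    hypergeometricOp a b c (fun s => f (1 - s)) s
      = hypergeometricOp a b (a + b + 1 - c) f (1 - s) := by
  have hd : deriv (fun s => f (1 - s)) = fun s => -deriv f (1 - s) :=
    funext (deriv_comp_const_sub f 1)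
  unfold hypergeometricOp
  rw [hd, deriv.fun_neg, deriv_comp_const_sub]
  ring

namespace Complex

theorem hasDerivAt_cpow_neg_mul_comp_inv {a x : ℂ} (hx : x ∈ slitPlane) {H : ℂ → ℂ} {H' : ℂ}
    (hH : HasDerivAt H H' x⁻¹) :
    HasDerivAt (fun z => z ^ (-a) * H z⁻¹) (-(x ^ (-a) * (a * x⁻¹ * H x⁻¹ + x⁻¹ ^ 2 * H'))) x := by
  have hx0 : x ≠ 0 := slitPlane_ne_zero hx
  refine ((hasStrictDerivAt_cpow_const hx).hasDerivAt.mul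
    (hH.comp x (hasDerivAt_inv hx0))).congr_deriv ?_
  rw [sub_eq_add_neg, cpow_add _ _ hx0, cpow_neg_one]
  simp only [Function.comp_apply, inv_pow]
  ring

theorem hypergeometricOp_cpow_neg_mul_comp_inv {a b c x : ℂ} (hx : x ∈ slitPlane) {F : ℂ → ℂ}
    (hF : AnalyticAt ℂ F x⁻¹) :
    hypergeometricOp a b c (fun z => z ^ (-a) * F z⁻¹) x
      = -(x ^ (-a) * x⁻¹) * hypergeometricOp a (a - c + 1) (a - b + 1) F x⁻¹ := by
  have hx0 : x ≠ 0 := slitPlane_ne_zero hx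
  set G : ℂ → ℂ := fun w => a * w * F w + w ^ 2 * deriv F w with hG
  have hy : ∀ᶠ z in 𝓝 x, HasDerivAt (fun z => z ^ (-a) * F z⁻¹) (-(z ^ (-a) * G z⁻¹)) z := by
    filter_upwards [isOpen_slitPlane.mem_nhds hx,
      (tendsto_inv₀ hx0).eventually hF.eventually_analyticAt] with z hz hFz
    exact hasDerivAt_cpow_neg_mul_comp_inv hz hFz.differentiableAt.hasDerivAt
  have hdy : deriv (fun z => z ^ (-a) * F z⁻¹) =ᶠ[𝓝 x] -fun z => z ^ (-a) * G z⁻¹ :=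
    hy.mono fun z hz => hz.deriv
  have hG' : HasDerivAt G (a * F x⁻¹ + a * x⁻¹ * deriv F x⁻¹ + 2 * x⁻¹ * deriv F x⁻¹
      + x⁻¹ ^ 2 * deriv (deriv F) x⁻¹) x⁻¹ := by
    refine ((((hasDerivAt_id x⁻¹).const_mul a).mul hF.differentiableAt.hasDerivAt).add
      ((hasDerivAt_pow 2 x⁻¹).mul hF.deriv.differentiableAt.hasDerivAt)).congr_deriv ?_
    simp only [_root_.id, Nat.cast_ofNat]
    ring
  unfold hypergeometricOp
  rw [hy.self_of_nhds.deriv, hdy.deriv_eq, (hasDerivAt_cpow_neg_mul_comp_inv hx hG').neg.deriv]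
  simp only [hG]
  generalize x ^ (-a) = P
  have hw : x⁻¹ ≠ 0 := inv_ne_zero hx0
  obtain ⟨w, rfl⟩ : ∃ w, x = w⁻¹ := ⟨x⁻¹, (inv_inv x).symm⟩
  rw [inv_inv] at hw ⊢
  field_simp
  ring

theorem analyticAt_cpow_neg_mul_comp_inv {a x : ℂ} (hx : x ∈ slitPlane) {F : ℂ → ℂ}
    (hF : AnalyticAt ℂ F x⁻¹) : AnalyticAt ℂ (fun z => z ^ (-a) * F z⁻¹) x :=
  (analyticAt_id.cpow analyticAt_const hx).mul
    (hF.comp (f := Inv.inv) (analyticAt_inv (slitPlane_ne_zero hx)))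

theorem hypergeometricOp_cpow_neg_mul_ordinaryHypergeometric_inv {a : ℂ}
    (ha : ∀ n : ℕ, 2 * a + n ≠ 0) {x : ℂ} (hx : x ∈ slitPlane) (hx1 : 1 < ‖x‖) :
    hypergeometricOp a (1 - a) 1 (fun z => z ^ (-a) * ₂F₁ a a (2 * a) z⁻¹) x = 0 := by
  have hw := enorm_inv_lt_radius_ordinaryHypergeometricSeries_two_mul ha hx1
  rw [hypergeometricOp_cpow_neg_mul_comp_inv hx (analyticAt_ordinaryHypergeometric hw),
    show a - 1 + 1 = a by ring, show a - (1 - a) + 1 = 2 * a by ring,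
    hypergeometricOp_ordinaryHypergeometric ha hw, mul_zero]

end Complex

theorem AnalyticAt.deriv_comp_ofReal {U : ℂ → ℂ} {t : ℝ} (h : AnalyticAt ℂ U t) :
    deriv (fun x : ℝ => U x) t = deriv U t :=
  h.differentiableAt.hasDerivAt.comp_ofReal.deriv

theorem AnalyticAt.deriv_deriv_comp_ofReal {U : ℂ → ℂ} {t : ℝ} (h : AnalyticAt ℂ U t) :
    deriv (deriv fun x : ℝ => U x) t = deriv (deriv U) t := by
  have hd : deriv (fun x : ℝ => U x) =ᶠ[𝓝 t] fun x : ℝ => deriv U x :=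
    ((Complex.continuous_ofReal.tendsto t).eventually h.eventually_analyticAt).mono
      fun x hx => hx.deriv_comp_ofReal
  rw [hd.deriv_eq]
  exact h.deriv.deriv_comp_ofReal

/-- for α ∈ ℂ with 2−2α not a nonpositive integer and every real t < 0,
u(t) := (1−t)^{α−1}·F(1−α,1−α;2−2α;1/(1−t)) satisfies t(1−t)u'' + (1−2t)u' + α(α−1)u = 0. -/
theorem stmt_11 (α : ℂ) (hα : ∀ m : ℕ, 2 - 2 * α ≠ -(m : ℂ)) (u : ℝ → ℂ)
    (hu : ∀ t : ℝ, u t =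
      ((1 - t : ℝ) : ℂ) ^ (α - 1) * hypF (1 - α) (1 - α) (2 - 2 * α) (1 / (1 - t))) :
    ∀ t : ℝ, t < 0 →
      (t : ℂ) * (1 - (t : ℂ)) * deriv (deriv u) t + (1 - 2 * (t : ℂ)) * deriv u t
        + α * (α - 1) * u t = 0 := by
  intro t ht
  have hx : 1 - (t : ℂ) ∈ Complex.slitPlane :=
    Complex.mem_slitPlane_iff.mpr (Or.inl (by simp; linarith))
  have hx1 : 1 < ‖1 - (t : ℂ)‖ := by
    rw [← Complex.ofReal_one, ← Complex.ofReal_sub, Complex.norm_real, Real.norm_eq_abs]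
    exact lt_abs.mpr (Or.inl (by linarith))
  have ha : ∀ n : ℕ, 2 * (1 - α) + n ≠ 0 := fun n h => hα n (by linear_combination h)
  set y : ℂ → ℂ := fun z => z ^ (-(1 - α)) * ₂F₁ (1 - α) (1 - α) (2 * (1 - α)) z⁻¹ with hy
  have hU : AnalyticAt ℂ (fun s => y (1 - s)) t :=
    (Complex.analyticAt_cpow_neg_mul_comp_inv hx (analyticAt_ordinaryHypergeometric
      (enorm_inv_lt_radius_ordinaryHypergeometricSeries_two_mul ha hx1))).comp
      (analyticAt_const.sub analyticAt_id)
  have huU : u = fun t : ℝ => y (1 - t) := by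
    funext t
    rw [hu, hypF_eq_ordinaryHypergeometric, hy, neg_sub,
      show (2 : ℂ) - 2 * α = 2 * (1 - α) by ring]
    push_cast
    rw [one_div]
  have hode : hypergeometricOp (1 - α) (1 - (1 - α)) 1 (fun s => y (1 - s)) t = 0 := by
    rw [hypergeometricOp_comp_one_sub, show 1 - α + (1 - (1 - α)) + 1 - 1 = 1 by ring]
    exact Complex.hypergeometricOp_cpow_neg_mul_ordinaryHypergeometric_inv ha hx hx1
  rw [huU, hU.deriv_deriv_comp_ofReal, hU.deriv_comp_ofReal]
  unfold hypergeometricOp at hode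
  linear_combination hode
end

section
/- Let α ∈ ℂ be such that 2α is not a nonpositive integer. For every real t < 0, the function u(t) := (1−t)^{−α}·F(α+1, α−1; 2α; 1/(1−t)) satisfies t(1−t)·u''(t) + (1−2t)·u'(t) + α(α−1)·u(t) = u(t)/(1−t). -/
/-!
Expanding the hypergeometric series, `u t = ∑ cₖ (1 - t)^(-(α + k))` with
`cₖ = (α+1)ₖ (α-1)ₖ / ((2α)ₖ k!)`, a series in powers of `1 / (1 - t) ∈ (0, 1)`. It may be
differentiated termwise for `t < 0`, because multiplying the coefficients by a linear polynomial
in `k` does not shrink the radius of convergence. With `w = 1 - t`, the `k`-th term of the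
differential expression is `hₖ₊₁ - hₖ`, where `hₖ = k (2α + k - 1) cₖ w^(-(α + k))`: this is the
coefficient recurrence `(k + 1) (2α + k) cₖ₊₁ = (α + 1 + k) (α - 1 + k) cₖ`. The series telescopes
to `-h₀ = 0`.
-/

open Filter Topology Set FormalMultilinearSeries

theorem radius_ofScalars_le_radius_ofScalars_add_mul (c : ℕ → ℂ) (β : ℂ) :
    (ofScalars ℂ c).radius ≤ (ofScalars ℂ fun k => (β + k) * c k).radius := by
  refine ENNReal.le_of_forall_nnreal_lt fun r hr => ?_
  obtain ⟨a, ⟨ha0, ha1⟩, C, -, hC⟩ := norm_mul_pow_le_mul_pow_of_lt_radius _ hr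
  apply le_radius_of_tendsto _ (l := 0)
  refine squeeze_zero (g := fun n : ℕ => C * (‖β‖ * a ^ n + n * a ^ n)) (fun n => ?_)
    (fun n => ?_) ?_
  · positivity
  · have hβn : ‖β + n‖ ≤ ‖β‖ + n := by simpa using norm_add_le β (n : ℂ)
    have hCn := hC n
    simp only [ofScalars_norm] at hCn ⊢
    rw [norm_mul]
    calc ‖β + n‖ * ‖c n‖ * (r : ℝ) ^ n = ‖β + n‖ * (‖c n‖ * (r : ℝ) ^ n) := by ring
      _ ≤ (‖β‖ + n) * (C * a ^ n) := by gcongr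
      _ = _ := by ring
  · simpa using ((tendsto_pow_atTop_nhds_zero_of_lt_one ha0.le ha1).const_mul ‖β‖).add
      (tendsto_self_mul_const_pow_of_lt_one ha0.le ha1) |>.const_mul C

theorem summable_norm_mul_pow_of_one_le_radius {c : ℕ → ℂ} (hc : 1 ≤ (ofScalars ℂ c).radius)
    {r : ℝ} (hr0 : 0 ≤ r) (hr1 : r < 1) : Summable fun k => ‖c k‖ * r ^ k := by
  lift r to NNReal using hr0
  simpa using summable_norm_mul_pow _ (lt_of_lt_of_le (by exact_mod_cast hr1) hc)

theorem one_le_radius_ordinaryHypergeometricSeries (a b c : ℂ) (hc : ∀ k : ℕ, c ≠ -k) :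
    1 ≤ (ordinaryHypergeometricSeries ℂ a b c).radius := by
  by_cases ha : ∃ k : ℕ, a = -k
  · obtain ⟨k, rfl⟩ := ha
    simp [ordinaryHypergeometric_radius_top_of_neg_nat₁]
  by_cases hb : ∃ k : ℕ, b = -k
  · obtain ⟨k, rfl⟩ := hb
    simp [ordinaryHypergeometric_radius_top_of_neg_nat₂]
  push Not at ha hb
  rw [ordinaryHypergeometricSeries_radius_eq_one]
  intro k
  refine ⟨fun h => ha k ?_, fun h => hb k ?_, fun h => hc k ?_⟩ <;> linear_combination h

theorem ordinaryHypergeometricCoefficient_succ_mul (a b c : ℂ) (hc : ∀ k : ℕ, c ≠ -k) (k : ℕ) :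
    ordinaryHypergeometricCoefficient a b c (k + 1) * ((k + 1) * (c + k)) =
      ordinaryHypergeometricCoefficient a b c k * ((a + k) * (b + k)) := by
  have hck : c + k ≠ 0 := fun h => hc k (by linear_combination h)
  have hpoch : (ascPochhammer ℂ k).eval c ≠ 0 := by
    rw [ne_eq, ascPochhammer_eval_eq_zero_iff]
    rintro ⟨j, -, hj⟩
    exact hc j (by linear_combination hj)
  simp only [ordinaryHypergeometricCoefficient, Nat.factorial_succ, ascPochhammer_succ_eval]
  push_cast
  field_simp

theorem hasDerivAt_ofReal_one_sub_cpow_neg (γ : ℂ) {t : ℝ} (ht : t < 1) :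
    HasDerivAt (fun s : ℝ => ((1 - s : ℝ) : ℂ) ^ (-γ)) (γ * ((1 - t : ℝ) : ℂ) ^ (-(γ + 1))) t := by
  have hslit : ((1 - t : ℝ) : ℂ) ∈ Complex.slitPlane :=
    Complex.ofReal_mem_slitPlane.2 (by linarith)
  refine ((Complex.hasStrictDerivAt_cpow_const (c := -γ) hslit).hasDerivAt.comp t
    ((hasDerivAt_id t).const_sub 1).ofReal_comp).congr_deriv ?_
  rw [neg_add']
  push_cast
  ring

theorem norm_ofReal_cpow_neg_add_le {v w W : ℝ} (hv : 0 < v) (hvw : v ≤ w) (hw : 1 ≤ w)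
    (hwW : w ≤ W) (γ : ℂ) (k : ℕ) :
    ‖(w : ℂ) ^ (-(γ + k))‖ ≤ W ^ |γ.re| * v⁻¹ ^ k := by
  have hw0 : 0 < w := hv.trans_le hvw
  rw [Complex.norm_cpow_eq_rpow_re_of_pos hw0]
  have hre : (-(γ + k)).re = -γ.re - k := by simp; ring
  rw [hre, Real.rpow_sub hw0, Real.rpow_natCast, inv_pow, ← div_eq_mul_inv]
  gcongr
  · exact Real.rpow_nonneg (by linarith) _
  calc w ^ (-γ.re) ≤ w ^ |γ.re| := Real.rpow_le_rpow_of_exponent_le hw (neg_le_abs _)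
    _ ≤ W ^ |γ.re| := Real.rpow_le_rpow hw0.le hwW (abs_nonneg _)

theorem summable_mul_ofReal_cpow_neg_add {c : ℕ → ℂ} (hc : 1 ≤ (ofScalars ℂ c).radius) (γ : ℂ)
    {w : ℝ} (hw : 1 < w) : Summable fun k => c k * (w : ℂ) ^ (-(γ + k)) := by
  have hsum := (summable_norm_mul_pow_of_one_le_radius hc (inv_nonneg.2 (by linarith))
    (inv_lt_one_of_one_lt₀ hw)).mul_left (w ^ |γ.re|)
  refine .of_norm_bounded hsum fun k => ?_
  rw [norm_mul, mul_left_comm]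
  gcongr
  exact norm_ofReal_cpow_neg_add_le (by linarith) le_rfl hw.le le_rfl γ k

theorem hasSum_sub_nat_succ {G : Type*} [AddCommGroup G] [TopologicalSpace G]
    [IsTopologicalAddGroup G] {f : ℕ → G} (hf : Summable f) :
    HasSum (fun k => f (k + 1) - f k) (-f 0) := by
  simpa using ((hasSum_nat_add_iff' 1).2 hf.hasSum).sub hf.hasSum

noncomputable def oneSubCpowSeries (c : ℕ → ℂ) (β : ℂ) (t : ℝ) : ℂ :=
  ∑' k, c k * ((1 - t : ℝ) : ℂ) ^ (-(β + k))

theorem hasSum_oneSubCpowSeries {c : ℕ → ℂ} (hc : 1 ≤ (ofScalars ℂ c).radius) (β : ℂ)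
    {t : ℝ} (ht : t < 0) :
    HasSum (fun k => c k * ((1 - t : ℝ) : ℂ) ^ (-(β + k))) (oneSubCpowSeries c β t) :=
  (summable_mul_ofReal_cpow_neg_add hc β (by linarith)).hasSum

theorem ofReal_one_sub_cpow_neg_mul_hypF_eq (a b c β : ℂ) {t : ℝ} (ht : t < 1) :
    ((1 - t : ℝ) : ℂ) ^ (-β) * hypF a b c (1 / (1 - t)) =
      oneSubCpowSeries (ordinaryHypergeometricCoefficient a b c) β t := by
  have hw : ((1 - t : ℝ) : ℂ) ≠ 0 := Complex.ofReal_ne_zero.2 (by linarith)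
  rw [hypF, oneSubCpowSeries, ← tsum_mul_left]
  refine tsum_congr fun k => ?_
  rw [neg_add, Complex.cpow_add _ _ hw, Complex.cpow_neg _ (k : ℂ), Complex.cpow_natCast]
  push_cast
  field_simp
  ring

theorem hasDerivAt_oneSubCpowSeries {c : ℕ → ℂ} (hc : 1 ≤ (ofScalars ℂ c).radius) (β : ℂ)
    {t : ℝ} (ht : t < 0) :
    HasDerivAt (oneSubCpowSeries c β)
      (oneSubCpowSeries (fun k => (β + k) * c k) (β + 1) t) t := by
  have hc' := hc.trans (radius_ofScalars_le_radius_ofScalars_add_mul c β)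
  have hsum := (summable_norm_mul_pow_of_one_le_radius hc'
    (inv_nonneg.2 (by linarith : (0 : ℝ) ≤ 1 - t / 2))
    (inv_lt_one_of_one_lt₀ (by linarith))).mul_left ((2 - t) ^ |(β + 1).re|)
  have hts : t ∈ Ioo (t - 1) (t / 2) := ⟨by linarith, by linarith⟩
  unfold oneSubCpowSeries
  refine hasDerivAt_tsum_of_isPreconnected (g := fun k s => c k * ((1 - s : ℝ) : ℂ) ^ (-(β + k)))
    (g' := fun k s => (β + k) * c k * ((1 - s : ℝ) : ℂ) ^ (-(β + 1 + k)))
    hsum isOpen_Ioo isPreconnected_Ioo (fun k y hy => ?_) (fun k y hy => ?_) hts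
    (summable_mul_ofReal_cpow_neg_add hc β (by linarith)) hts
  · refine ((hasDerivAt_ofReal_one_sub_cpow_neg (β + k) (t := y) (by linarith [hy.2])).const_mul
      (c k)).congr_deriv ?_
    rw [add_right_comm]
    ring
  · rw [norm_mul, mul_left_comm]
    gcongr
    exact norm_ofReal_cpow_neg_add_le (by linarith) (by linarith [hy.2]) (by linarith [hy.2])
      (by linarith [hy.1]) _ k

theorem ode_summand_eq_sub {α t w : ℂ} (hw : w ≠ 0) (hwt : 1 - t = w) {c : ℕ → ℂ}
    (hrec : ∀ k : ℕ, c (k + 1) * ((k + 1) * (2 * α + k)) = c k * ((α + 1 + k) * (α - 1 + k)))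
    (k : ℕ) :
    t * (1 - t) * ((α + 1 + k) * ((α + k) * c k) * w ^ (-(α + 1 + 1 + k)))
      + (1 - 2 * t) * ((α + k) * c k * w ^ (-(α + 1 + k)))
      + α * (α - 1) * (c k * w ^ (-(α + k))) - c k * w ^ (-(α + k)) / (1 - t)
      = ((k + 1 : ℕ) : ℂ) * ((2 * α - 1 + (k + 1 : ℕ)) * c (k + 1)) * w ^ (-(α + (k + 1 : ℕ)))
        - k * ((2 * α - 1 + k) * c k) * w ^ (-(α + k)) := by
  have hshift : ∀ γ : ℂ, w ^ (-γ) = w ^ (-(γ + 1)) * w := fun γ => by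
    rw [neg_add', Complex.cpow_sub _ _ hw, Complex.cpow_one, div_mul_cancel₀ _ hw]
  set P := w ^ (-(α + 1 + 1 + k))
  have e1 : w ^ (-(α + 1 + k)) = P * w := by rw [hshift, add_right_comm]
  have e0 : w ^ (-(α + k)) = P * w * w := by rw [hshift, add_right_comm, e1]
  have e1' : w ^ (-(α + (k + 1 : ℕ))) = P * w := by rw [← e1]; push_cast; ring_nf
  obtain rfl : t = 1 - w := by rw [← hwt]; ring
  rw [e0, e1, e1', sub_sub_cancel]
  push_cast
  field_simp
  linear_combination (-P) * hrec k

theorem oneSubCpowSeries_ode {α : ℂ} {c : ℕ → ℂ} (hc : 1 ≤ (ofScalars ℂ c).radius)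
    (hrec : ∀ k : ℕ, c (k + 1) * ((k + 1) * (2 * α + k)) = c k * ((α + 1 + k) * (α - 1 + k)))
    {t : ℝ} (ht : t < 0) :
    (t : ℂ) * (1 - t) * oneSubCpowSeries (fun k => (α + 1 + k) * ((α + k) * c k)) (α + 1 + 1) t
      + (1 - 2 * t) * oneSubCpowSeries (fun k => (α + k) * c k) (α + 1) t
      + α * (α - 1) * oneSubCpowSeries c α t = oneSubCpowSeries c α t / (1 - t) := by
  have hc1 := hc.trans (radius_ofScalars_le_radius_ofScalars_add_mul c α)
  have hc2 := hc1.trans (radius_ofScalars_le_radius_ofScalars_add_mul _ (α + 1))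
  have hd := (hc.trans (radius_ofScalars_le_radius_ofScalars_add_mul c (2 * α - 1))).trans
    (radius_ofScalars_le_radius_ofScalars_add_mul _ 0)
  have hsum := ((((hasSum_oneSubCpowSeries hc2 (α + 1 + 1) ht).mul_left ((t : ℂ) * (1 - t))).add
    ((hasSum_oneSubCpowSeries hc1 (α + 1) ht).mul_left (1 - 2 * (t : ℂ)))).add
    ((hasSum_oneSubCpowSeries hc α ht).mul_left (α * (α - 1)))).sub
    ((hasSum_oneSubCpowSeries hc α ht).div_const (1 - (t : ℂ)))
  rw [funext (ode_summand_eq_sub (Complex.ofReal_ne_zero.2 (by linarith)) (by push_cast; ring)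
    hrec)] at hsum
  have htele := hasSum_sub_nat_succ <| by
    simpa only [zero_add] using summable_mul_ofReal_cpow_neg_add hd α (w := 1 - t) (by linarith)
  simpa [sub_eq_zero] using hsum.unique htele

/-- for α ∈ ℂ with 2α not a nonpositive integer and every real t < 0,
u(t) := (1−t)^{−α}·F(α+1,α−1;2α;1/(1−t)) satisfies
t(1−t)u'' + (1−2t)u' + α(α−1)u = u/(1−t). -/
theorem stmt_13 (α : ℂ) (hα : ∀ m : ℕ, 2 * α ≠ -(m : ℂ)) (u : ℝ → ℂ)
    (hu : ∀ t : ℝ, u t =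
      ((1 - t : ℝ) : ℂ) ^ (-α) * hypF (α + 1) (α - 1) (2 * α) (1 / (1 - t))) :
    ∀ t : ℝ, t < 0 →
      (t : ℂ) * (1 - (t : ℂ)) * deriv (deriv u) t + (1 - 2 * (t : ℂ)) * deriv u t
        + α * (α - 1) * u t = u t / (1 - (t : ℂ)) := by
  intro t ht
  set c := ordinaryHypergeometricCoefficient (α + 1) (α - 1) (2 * α)
  have hc : 1 ≤ (ofScalars ℂ c).radius := one_le_radius_ordinaryHypergeometricSeries _ _ _ hα
  have hc1 := hc.trans (radius_ofScalars_le_radius_ofScalars_add_mul c α)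
  have hu_eq : EqOn u (oneSubCpowSeries c α) (Iio 0) := fun s hs =>
    (hu s).trans (ofReal_one_sub_cpow_neg_mul_hypF_eq _ _ _ _ (by linarith [mem_Iio.1 hs]))
  have hdu : EqOn (deriv u) (oneSubCpowSeries (fun k => (α + k) * c k) (α + 1)) (Iio 0) :=
    fun s hs => ((hasDerivAt_oneSubCpowSeries hc α hs).congr_of_eventuallyEq
      (eventuallyEq_of_mem (Iio_mem_nhds hs) hu_eq)).deriv
  have hd2u := ((hasDerivAt_oneSubCpowSeries hc1 (α + 1) ht).congr_of_eventuallyEq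
      (eventuallyEq_of_mem (Iio_mem_nhds ht) hdu)).deriv
  rw [hd2u, hdu ht, hu_eq ht]
  exact oneSubCpowSeries_ode hc
    (ordinaryHypergeometricCoefficient_succ_mul _ _ _ hα) ht
end

section
/- Let n, p be integers with 1 ≤ p ≤ n−1, let I ⊆ ℝ be an open interval with 0 ∉ I and 1 ∉ I, let h : I → ℝ, and let f, f̂ : I → ℝ be twice differentiable functions satisfying, for all z ∈ I, the coupled system z(1−z)f''(z) + (n/2)(1−2z)f'(z) − [ p(1/(2z(1−z)) + n−p−1) ]·f(z) = h(z) − (p(1−2z)/(2z(1−z)))·f̂(z) and z(1−z)f̂''(z) + (n/2)(1−2z)f̂'(z) − [ (n−p)(1/(2z(1−z)) + p−1) ]·f̂(z) = h(z) − ((n−p)(1−2z)/(2z(1−z)))·f(z). Define g(z) := f'(z) + p·[ (1−2z)·f(z) − f̂(z) ]/(2z(1−z)) and ĝ(z) := f̂'(z) + (n−p)·[ (1−2z)·f̂(z) − f(z) ]/(2z(1−z)). Then for all z ∈ I: z(1−z)g'(z) + (n−p)(1/2−z)·g(z) + (p/2)·ĝ(z) = h(z) and z(1−z)ĝ'(z)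 + p(1/2−z)·ĝ(z) + ((n−p)/2)·g(z) = h(z). -/
/-!
Differentiating `g` brings in `f''`, which the first equation of the system eliminates; what is
left is an identity between rational functions of `z` with coefficients in `f, f', f̂, f̂'`.
Each first-order equation thus uses only one of the second-order ones, and the two cases are
exchanged by `p ↔ n - p`, `f ↔ f̂`.
-/

noncomputable def decoupling (q : ℝ) (u v : ℝ → ℝ) (z : ℝ) : ℝ :=
  deriv u z + q * ((1 - 2 * z) * u z - v z) / (2 * z * (1 - z))

lemma hasDerivAt_decoupling {q z : ℝ} {u v : ℝ → ℝ} (hD : 2 * z * (1 - z) ≠ 0)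
    (hu : DifferentiableAt ℝ u z) (hu' : DifferentiableAt ℝ (deriv u) z)
    (hv : DifferentiableAt ℝ v z) :
    HasDerivAt (decoupling q u v)
      (deriv (deriv u) z
        + (q * (-2 * u z + (1 - 2 * z) * deriv u z - deriv v z) * (2 * z * (1 - z))
          - q * ((1 - 2 * z) * u z - v z) * (2 - 4 * z)) / (2 * z * (1 - z)) ^ 2) z := by
  have hlin : HasDerivAt (fun z : ℝ => 1 - 2 * z) (-2) z :=
    (((hasDerivAt_id z).const_mul 2).const_sub 1).congr_deriv (by ring)
  have hden : HasDerivAt (fun z : ℝ => 2 * z * (1 - z)) (2 - 4 * z) z :=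
    (((hasDerivAt_id z).const_mul 2).mul ((hasDerivAt_id z).const_sub 1)).congr_deriv
      (by simp only [id]; ring)
  exact hu'.hasDerivAt.add ((((hlin.mul hu.hasDerivAt).sub hv.hasDerivAt).const_mul q).div hden hD)

theorem decoupling_eq {q r z : ℝ} {h u v : ℝ → ℝ} (hz0 : z ≠ 0) (hz1 : z ≠ 1)
    (hu : DifferentiableAt ℝ u z) (hu' : DifferentiableAt ℝ (deriv u) z)
    (hv : DifferentiableAt ℝ v z)
    (heq : z * (1 - z) * deriv (deriv u) z + ((q + r) / 2) * (1 - 2 * z) * deriv u z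
      - q * (1 / (2 * z * (1 - z)) + r - 1) * u z
        = h z - q * (1 - 2 * z) / (2 * z * (1 - z)) * v z) :
    z * (1 - z) * deriv (decoupling q u v) z + r * (1 / 2 - z) * decoupling q u v z
      + (q / 2) * decoupling r v u z = h z := by
  have h1z : 1 - z ≠ 0 := sub_ne_zero.mpr hz1.symm
  rw [(hasDerivAt_decoupling (by positivity) hu hu' hv).deriv, decoupling, decoupling]
  field_simp at heq ⊢
  linear_combination 2 * heq

theorem stmt_17_general (n p : ℤ)
    (a b : ℝ) (h0 : (0 : ℝ) ∉ Set.Ioo a b) (h1 : (1 : ℝ) ∉ Set.Ioo a b)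
    (h f fh : ℝ → ℝ)
    (hf : ∀ z ∈ Set.Ioo a b, DifferentiableAt ℝ f z)
    (hf' : ∀ z ∈ Set.Ioo a b, DifferentiableAt ℝ (deriv f) z)
    (hfh : ∀ z ∈ Set.Ioo a b, DifferentiableAt ℝ fh z)
    (hfh' : ∀ z ∈ Set.Ioo a b, DifferentiableAt ℝ (deriv fh) z)
    (heq1 : ∀ z ∈ Set.Ioo a b,
      z * (1 - z) * deriv (deriv f) z + ((n : ℝ) / 2) * (1 - 2 * z) * deriv f z
          - ((p : ℝ) * (1 / (2 * z * (1 - z)) + (n : ℝ) - (p : ℝ) - 1)) * f z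
        = h z - ((p : ℝ) * (1 - 2 * z) / (2 * z * (1 - z))) * fh z)
    (heq2 : ∀ z ∈ Set.Ioo a b,
      z * (1 - z) * deriv (deriv fh) z + ((n : ℝ) / 2) * (1 - 2 * z) * deriv fh z
          - (((n : ℝ) - (p : ℝ)) * (1 / (2 * z * (1 - z)) + (p : ℝ) - 1)) * fh z
        = h z - (((n : ℝ) - (p : ℝ)) * (1 - 2 * z) / (2 * z * (1 - z))) * f z)
    (g gh : ℝ → ℝ)
    (hg : ∀ z : ℝ, g z = deriv f z + (p : ℝ) * ((1 - 2 * z) * f z - fh z) / (2 * z * (1 - z)))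
    (hgh : ∀ z : ℝ, gh z = deriv fh z
      + ((n : ℝ) - (p : ℝ)) * ((1 - 2 * z) * fh z - f z) / (2 * z * (1 - z))) :
    ∀ z ∈ Set.Ioo a b,
      (z * (1 - z) * deriv g z + ((n : ℝ) - (p : ℝ)) * (1 / 2 - z) * g z
          + ((p : ℝ) / 2) * gh z = h z) ∧
      (z * (1 - z) * deriv gh z + (p : ℝ) * (1 / 2 - z) * gh z
          + (((n : ℝ) - (p : ℝ)) / 2) * g z = h z) := by
  obtain rfl : g = decoupling p f fh := funext hg
  obtain rfl : gh = decoupling ((n : ℝ) - p) fh f := funext hgh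
  intro z hz
  have hz0 : z ≠ 0 := fun hz0 => h0 (hz0 ▸ hz)
  have hz1 : z ≠ 1 := fun hz1 => h1 (hz1 ▸ hz)
  exact ⟨decoupling_eq hz0 hz1 (hf z hz) (hf' z hz) (hfh z hz) (by linear_combination heq1 z hz),
    decoupling_eq hz0 hz1 (hfh z hz) (hfh' z hz) (hf z hz) (by linear_combination heq2 z hz)⟩

/-- the differential substitution decoupling the radial system of the Hodge
Laplacian in constant curvature (case ℓ = 0) into a first-order system. -/
theorem stmt_17 (n p : ℤ) (hp : 1 ≤ p) (hpn : p ≤ n - 1)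
    (a b : ℝ) (h0 : (0 : ℝ) ∉ Set.Ioo a b) (h1 : (1 : ℝ) ∉ Set.Ioo a b)
    (h f fh : ℝ → ℝ)
    (hf : ∀ z ∈ Set.Ioo a b, DifferentiableAt ℝ f z)
    (hf' : ∀ z ∈ Set.Ioo a b, DifferentiableAt ℝ (deriv f) z)
    (hfh : ∀ z ∈ Set.Ioo a b, DifferentiableAt ℝ fh z)
    (hfh' : ∀ z ∈ Set.Ioo a b, DifferentiableAt ℝ (deriv fh) z)
    (heq1 : ∀ z ∈ Set.Ioo a b,
      z * (1 - z) * deriv (deriv f) z + ((n : ℝ) / 2) * (1 - 2 * z) * deriv f z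
          - ((p : ℝ) * (1 / (2 * z * (1 - z)) + (n : ℝ) - (p : ℝ) - 1)) * f z
        = h z - ((p : ℝ) * (1 - 2 * z) / (2 * z * (1 - z))) * fh z)
    (heq2 : ∀ z ∈ Set.Ioo a b,
      z * (1 - z) * deriv (deriv fh) z + ((n : ℝ) / 2) * (1 - 2 * z) * deriv fh z
          - (((n : ℝ) - (p : ℝ)) * (1 / (2 * z * (1 - z)) + (p : ℝ) - 1)) * fh z
        = h z - (((n : ℝ) - (p : ℝ)) * (1 - 2 * z) / (2 * z * (1 - z))) * f z)
    (g gh : ℝ → ℝ)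
    (hg : ∀ z : ℝ, g z = deriv f z + (p : ℝ) * ((1 - 2 * z) * f z - fh z) / (2 * z * (1 - z)))
    (hgh : ∀ z : ℝ, gh z = deriv fh z
      + ((n : ℝ) - (p : ℝ)) * ((1 - 2 * z) * fh z - f z) / (2 * z * (1 - z))) :
    ∀ z ∈ Set.Ioo a b,
      (z * (1 - z) * deriv g z + ((n : ℝ) - (p : ℝ)) * (1 / 2 - z) * g z
          + ((p : ℝ) / 2) * gh z = h z) ∧
      (z * (1 - z) * deriv gh z + (p : ℝ) * (1 / 2 - z) * gh z
          + (((n : ℝ) - (p : ℝ)) / 2) * g z = h z) :=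
  stmt_17_general n p a b h0 h1 h f fh hf hf' hfh hfh' heq1 heq2 g gh hg hgh
end

section
/- Let n, p be integers with 1 ≤ p ≤ n−1, let I ⊆ ℝ be an open interval with 0 ∉ I and 1 ∉ I, let h : I → ℝ be differentiable, let g : I → ℝ be twice differentiable and ĝ : I → ℝ differentiable, and suppose that for all z ∈ I: z(1−z)g'(z) + (n−p)(1/2−z)·g(z) + (p/2)·ĝ(z) = h(z) and z(1−z)ĝ'(z) + p(1/2−z)·ĝ(z) + ((n−p)/2)·g(z) = h(z). Then for all z ∈ I: z(1−z)g''(z) + (n/2+1)(1−2z)g'(z) − (n−p)(p+1)·g(z) = h'(z) + p·h(z)/(z−1). -/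
/-!
Differentiate the first equation of the system: this brings in `g''`, and also `gh'`.
The second equation expresses `z(1-z) gh'` through `gh`, `g` and `h`, and the first one
expresses `gh` through `g'`, `g` and `h`, so after multiplying by `z(1-z)` both `gh'` and `gh`
can be eliminated, leaving a second-order equation for `g` alone.
-/

open Filter Topology

lemma hasDerivAt_decoupled_lhs {u g k : ℝ → ℝ} {u' g' k' : ℝ} (c q : ℝ) {z : ℝ}
    (hu : HasDerivAt u u' z) (hg : HasDerivAt g g' z) (hk : HasDerivAt k k' z) :
    HasDerivAt (fun x => x * (1 - x) * u x + c * (1 / 2 - x) * g x + q * k x)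
      ((1 - 2 * z) * u z + z * (1 - z) * u' + (-c * g z + c * (1 / 2 - z) * g') + q * k') z := by
  have hq : HasDerivAt (fun x : ℝ => x * (1 - x)) (1 - 2 * z) z :=
    ((hasDerivAt_id' z).mul ((hasDerivAt_const z (1 : ℝ)).sub (hasDerivAt_id' z))).congr_deriv
      (by simp only [Pi.sub_apply]; ring)
  have hl : HasDerivAt (fun x : ℝ => c * (1 / 2 - x)) (-c) z := by
    simpa using ((hasDerivAt_const z ((1 : ℝ) / 2)).sub (hasDerivAt_id z)).const_mul c
  exact ((hq.mul hu).add (hl.mul hg)).add (hk.const_mul q)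

lemma decoupled_elimination {n p z G0 G1 G2 K0 K1 H0 H1 : ℝ} (hz0 : z ≠ 0) (hz1 : z ≠ 1)
    (e1 : z * (1 - z) * G1 + (n - p) * (1 / 2 - z) * G0 + p / 2 * K0 = H0)
    (e2 : z * (1 - z) * K1 + p * (1 / 2 - z) * K0 + (n - p) / 2 * G0 = H0)
    (e3 : (1 - 2 * z) * G1 + z * (1 - z) * G2 + (-(n - p) * G0 + (n - p) * (1 / 2 - z) * G1)
      + p / 2 * K1 = H1) :
    z * (1 - z) * G2 + (n / 2 + 1) * (1 - 2 * z) * G1 - (n - p) * (p + 1) * G0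
      = H1 + p * H0 / (z - 1) := by
  have hzz : z * (1 - z) ≠ 0 := mul_ne_zero hz0 (sub_ne_zero.mpr hz1.symm)
  calc _ = (z * (1 - z) * H1 - p * z * H0) / (z * (1 - z)) := by
        rw [eq_div_iff hzz]
        linear_combination (z * (1 - z)) * e3 + (p * (1 / 2 - z)) * e1 - (p / 2) * e2
    _ = H1 + p * H0 / (z - 1) := by
        field_simp [sub_ne_zero.mpr hz1, sub_ne_zero.mpr hz1.symm]
        ring

theorem stmt_18_general (n p : ℤ)
    (a b : ℝ) (h0 : (0 : ℝ) ∉ Set.Ioo a b) (h1 : (1 : ℝ) ∉ Set.Ioo a b)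
    (h g gh : ℝ → ℝ)
    (hg : ∀ z ∈ Set.Ioo a b, DifferentiableAt ℝ g z)
    (hg' : ∀ z ∈ Set.Ioo a b, DifferentiableAt ℝ (deriv g) z)
    (hgh : ∀ z ∈ Set.Ioo a b, DifferentiableAt ℝ gh z)
    (heq1 : ∀ z ∈ Set.Ioo a b,
      z * (1 - z) * deriv g z + ((n : ℝ) - (p : ℝ)) * (1 / 2 - z) * g z
        + ((p : ℝ) / 2) * gh z = h z)
    (heq2 : ∀ z ∈ Set.Ioo a b,
      z * (1 - z) * deriv gh z + (p : ℝ) * (1 / 2 - z) * gh z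
        + (((n : ℝ) - (p : ℝ)) / 2) * g z = h z) :
    ∀ z ∈ Set.Ioo a b,
      z * (1 - z) * deriv (deriv g) z + ((n : ℝ) / 2 + 1) * (1 - 2 * z) * deriv g z
          - ((n : ℝ) - (p : ℝ)) * ((p : ℝ) + 1) * g z
        = deriv h z + (p : ℝ) * h z / (z - 1) := by
  intro z hz
  have hz0 : z ≠ 0 := fun hz0 => h0 (hz0 ▸ hz)
  have hz1 : z ≠ 1 := fun hz1 => h1 (hz1 ▸ hz)
  have h_eq_lhs : h =ᶠ[𝓝 z] fun x => x * (1 - x) * deriv g x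
      + ((n : ℝ) - (p : ℝ)) * (1 / 2 - x) * g x + ((p : ℝ) / 2) * gh x :=
    eventually_of_mem (isOpen_Ioo.mem_nhds hz) fun x hx => (heq1 x hx).symm
  have h_deriv := ((hasDerivAt_decoupled_lhs _ _ (hg' z hz).hasDerivAt (hg z hz).hasDerivAt
    (hgh z hz).hasDerivAt).congr_of_eventuallyEq h_eq_lhs).deriv
  exact decoupled_elimination hz0 hz1 (heq1 z hz) (heq2 z hz) h_deriv.symm

/-- the first-order decoupled system arising from the radial part of the Hodge
Green's function in constant curvature leads to a hypergeometric-type second-order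
equation for g. -/
theorem stmt_18 (n p : ℤ) (hp : 1 ≤ p) (hpn : p ≤ n - 1)
    (a b : ℝ) (h0 : (0 : ℝ) ∉ Set.Ioo a b) (h1 : (1 : ℝ) ∉ Set.Ioo a b)
    (h g gh : ℝ → ℝ)
    (hh : ∀ z ∈ Set.Ioo a b, DifferentiableAt ℝ h z)
    (hg : ∀ z ∈ Set.Ioo a b, DifferentiableAt ℝ g z)
    (hg' : ∀ z ∈ Set.Ioo a b, DifferentiableAt ℝ (deriv g) z)
    (hgh : ∀ z ∈ Set.Ioo a b, DifferentiableAt ℝ gh z)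
    (heq1 : ∀ z ∈ Set.Ioo a b,
      z * (1 - z) * deriv g z + ((n : ℝ) - (p : ℝ)) * (1 / 2 - z) * g z
        + ((p : ℝ) / 2) * gh z = h z)
    (heq2 : ∀ z ∈ Set.Ioo a b,
      z * (1 - z) * deriv gh z + (p : ℝ) * (1 / 2 - z) * gh z
        + (((n : ℝ) - (p : ℝ)) / 2) * g z = h z) :
    ∀ z ∈ Set.Ioo a b,
      z * (1 - z) * deriv (deriv g) z + ((n : ℝ) / 2 + 1) * (1 - 2 * z) * deriv g z
          - ((n : ℝ) - (p : ℝ)) * ((p : ℝ) + 1) * g z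
        = deriv h z + (p : ℝ) * h z / (z - 1) :=
  stmt_18_general n p a b h0 h1 h g gh hg hg' hgh heq1 heq2
end
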